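/- Let H be a 4-uniform hypergraph with balanced bipartition A ∪ B, |A| = |B| = n, minimizing |H(A,A,B,B)| over balanced bipartitions, with δ₃(H) ≥ n−1. Fix ε > 0 and suppose n is sufficiently large. If there exists a vertex b ∈ B with l_b^{ABB} ≤ (ε/2)n³ (an anarchist-like vertex), then every vertex a ∈ A satisfies l_a^{ABB} ≤ (3/2)ε·n³ (i.e., is 3ε-typical up to normalization). -/

import Mathlib

/-!
Swapping `a ∈ A` with `b ∈ B` yields another balanced bipartition, so by minimality it does not
decrease the number of edges meeting `A` in two vertices. Only edges through exactly one of `a`, `b`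
change class, which gives `l_a^{ABB} + l_b^{AAB} ≤ l_a^{AAB} + l_b^{ABB} + O(n²)`. Counting the
codegrees of the triples `{b, a', b'}` with `a' ∈ A`, `b' ∈ B` gives
`l_b^{AAB} + l_b^{ABB} ≥ n³/2 - O(n²)`, while trivially `l_a^{AAB} ≤ n³/2`. Hence
`l_a^{ABB} ≤ 2 l_b^{ABB} + O(n²) ≤ ε n³ + O(n²)`.
-/

open Finset

/-- Number of triples of link type (i vertices in A, j vertices in B) in the link of `v`. -/
def linkCount {V : Type} [Fintype V] [DecidableEq V] (H : Finset (Finset V)) (v : V)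
    (A B : Finset V) (i j : ℕ) : ℕ :=
  (((Finset.univ : Finset V).powersetCard 3).filter
    (fun T => v ∉ T ∧ (T ∩ A).card = i ∧ (T ∩ B).card = j ∧ insert v T ∈ H)).card

theorem card_filter_le_card_filter_add_card_filter {α : Type*} [DecidableEq α] {s : Finset α}
    {p q r : α → Prop} [DecidablePred p] [DecidablePred q] [DecidablePred r]
    (h : ∀ x ∈ s, p x → q x ∨ r x) :
    #{x ∈ s | p x} ≤ #{x ∈ s | q x} + #{x ∈ s | r x} := by
  refine (card_le_card fun x hx => ?_).trans (card_union_le _ _)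
  simp only [mem_union, mem_filter] at hx ⊢
  exact (h x hx.1 hx.2).imp (⟨hx.1, ·⟩) (⟨hx.1, ·⟩)

section Hypergraph

variable {V : Type*} [DecidableEq V] {H : Finset (Finset V)} {A : Finset V} {a b : V}

theorem card_filter_superset_le [Fintype V] {k : ℕ} (hH : ∀ e ∈ H, #e = k) (S : Finset V) :
    #{e ∈ H | S ⊆ e} ≤ (Fintype.card V).choose (k - #S) := by
  rw [← card_univ, ← card_powersetCard]
  refine card_le_card_of_injOn (· \ S) (fun e he => ?_) (fun e he e' he' h => ?_)
  · simp only [coe_filter, Set.mem_ofPred_eq] at he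
    simp [card_sdiff_of_subset he.2, hH e he.1]
  · simp only [coe_filter, Set.mem_ofPred_eq] at he he'
    rw [← sdiff_union_of_subset he.2, ← sdiff_union_of_subset he'.2]
    exact congrArg (· ∪ S) h

theorem card_inter_insert_erase_add (ha : a ∈ A) (hb : b ∉ A) (e : Finset V) :
    #(e ∩ insert b (A.erase a)) + (if a ∈ e then 1 else 0) =
      #(e ∩ A) + (if b ∈ e then 1 else 0) := by
  have herase : #(e ∩ A.erase a) + (if a ∈ e then 1 else 0) = #(e ∩ A) := by
    split_ifs with hae
    · rw [inter_erase, card_erase_add_one (mem_inter.2 ⟨hae, ha⟩)]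
    · rw [inter_erase, erase_eq_of_notMem fun h => hae (mem_inter.1 h).1, add_zero]
  have hinsert : #(e ∩ insert b (A.erase a)) = #(e ∩ A.erase a) + (if b ∈ e then 1 else 0) := by
    split_ifs with hbe
    · exact (inter_insert_of_mem hbe).symm ▸
        card_insert_of_notMem fun h => hb (mem_of_mem_erase (mem_inter.1 h).2)
    · rw [inter_insert_of_notMem hbe, add_zero]
  omega

theorem card_filter_swap_le (ha : a ∈ A) (hb : b ∉ A)
    (hmin : #{e ∈ H | #(e ∩ A) = 2} ≤ #{e ∈ H | #(e ∩ insert b (A.erase a)) = 2}) :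
    #{e ∈ H | a ∈ e ∧ b ∉ e ∧ #(e ∩ A) = 2} + #{e ∈ H | b ∈ e ∧ a ∉ e ∧ #(e ∩ A) = 2} ≤
      #{e ∈ H | a ∈ e ∧ b ∉ e ∧ #(e ∩ A) = 3} + #{e ∈ H | b ∈ e ∧ a ∉ e ∧ #(e ∩ A) = 1} := by
  -- The swap changes `#(e ∩ A)` only on edges containing exactly one of `a`, `b`.
  have key : ∀ e ∈ H,
      ((if #(e ∩ insert b (A.erase a)) = 2 then 1 else 0) +
        (if a ∈ e ∧ b ∉ e ∧ #(e ∩ A) = 2 then 1 else 0) +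
        (if b ∈ e ∧ a ∉ e ∧ #(e ∩ A) = 2 then 1 else 0) : ℕ) =
      (if #(e ∩ A) = 2 then 1 else 0) + (if a ∈ e ∧ b ∉ e ∧ #(e ∩ A) = 3 then 1 else 0) +
        (if b ∈ e ∧ a ∉ e ∧ #(e ∩ A) = 1 then 1 else 0) := by
    intro e _
    have := card_inter_insert_erase_add ha hb e
    by_cases hae : a ∈ e <;> by_cases hbe : b ∈ e <;>
      simp only [hae, hbe, if_true, if_false, true_and, false_and, not_true, not_false_eq_true,
        and_false] at this ⊢ <;>
      split_ifs <;> omega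
  have := sum_congr rfl key
  simp only [sum_add_distrib, ← card_filter] at this
  omega

end Hypergraph

section Link

variable {V : Type} [Fintype V] [DecidableEq V] {H : Finset (Finset V)} {A : Finset V}
  {i j : ℕ} {a b v : V}

theorem linkCount_le_choose_mul_choose (H : Finset (Finset V)) (v : V) (A : Finset V) (i j : ℕ) :
    linkCount H v A Aᶜ i j ≤ (#A).choose i * (#Aᶜ).choose j := by
  rw [← card_powersetCard, ← card_powersetCard, ← card_product]
  refine card_le_card_of_injOn (fun T => (T ∩ A, T ∩ Aᶜ)) (fun T hT => ?_)
    (fun T _ T' _ h => ?_)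
  · simp only [coe_filter, Set.mem_ofPred_eq] at hT
    simp [hT.2.2.1, hT.2.2.2.1]
  · simp only [Prod.mk.injEq] at h
    calc T = T ∩ A ∪ T ∩ Aᶜ := sup_inf_inf_compl.symm
      _ = T' := by rw [h.1, h.2]; exact sup_inf_inf_compl

theorem linkCount_compl_eq (hH : ∀ e ∈ H, #e = 4) (hij : i + j = 3) :
    linkCount H v A Aᶜ i j = #{e ∈ H | v ∈ e ∧ #(e.erase v ∩ A) = i} := by
  refine card_nbij' (insert v) (·.erase v) (fun T hT => ?_) (fun e he => ?_)
    (fun T hT => ?_) (fun e he => ?_)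
  · simp only [coe_filter, Set.mem_ofPred_eq, mem_powersetCard] at hT
    obtain ⟨-, hvT, hTA, -, hTH⟩ := hT
    simp only [coe_filter, Set.mem_ofPred_eq]
    exact ⟨hTH, mem_insert_self v T, by rwa [erase_insert hvT]⟩
  · simp only [coe_filter, Set.mem_ofPred_eq] at he
    obtain ⟨heH, hve, heA⟩ := he
    have hcard : #(e.erase v) = 3 := by rw [card_erase_of_mem hve, hH e heH]
    have hpart := card_inter_add_card_sdiff (e.erase v) A
    rw [sdiff_eq_inter_compl] at hpart
    simp only [coe_filter, Set.mem_ofPred_eq, mem_powersetCard]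
    exact ⟨⟨subset_univ _, hcard⟩, notMem_erase v e, heA, by omega, by rwa [insert_erase hve]⟩
  · simp only [coe_filter, Set.mem_ofPred_eq] at hT
    exact erase_insert hT.2.1
  · simp only [coe_filter, Set.mem_ofPred_eq] at he
    exact insert_erase he.2.1

theorem linkCount_compl_of_mem (hH : ∀ e ∈ H, #e = 4) (hij : i + j = 3) (hv : v ∈ A) :
    linkCount H v A Aᶜ i j = #{e ∈ H | v ∈ e ∧ #(e ∩ A) = i + 1} := by
  rw [linkCount_compl_eq hH hij]
  refine congrArg card (filter_congr fun e _ => and_congr_right fun hve => ?_)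
  rw [erase_inter, ← card_erase_add_one (mem_inter.2 ⟨hve, hv⟩)]
  omega

theorem linkCount_compl_of_notMem (hH : ∀ e ∈ H, #e = 4) (hij : i + j = 3) (hv : v ∉ A) :
    linkCount H v A Aᶜ i j = #{e ∈ H | v ∈ e ∧ #(e ∩ A) = i} := by
  rw [linkCount_compl_eq hH hij]
  refine congrArg card (filter_congr fun e _ => and_congr_right fun _ => ?_)
  rw [erase_inter, erase_eq_of_notMem fun h => hv (mem_inter.1 h).2]

theorem linkCount_swap_le (hH : ∀ e ∈ H, #e = 4) (ha : a ∈ A) (hb : b ∉ A)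
    (hmin : #{e ∈ H | #(e ∩ A) = 2} ≤ #{e ∈ H | #(e ∩ insert b (A.erase a)) = 2}) :
    linkCount H a A Aᶜ 1 2 + linkCount H b A Aᶜ 2 1 ≤
      linkCount H a A Aᶜ 2 1 + linkCount H b A Aᶜ 1 2 + 2 * #{e ∈ H | {a, b} ⊆ e} := by
  rw [linkCount_compl_of_mem hH rfl ha, linkCount_compl_of_mem hH rfl ha,
    linkCount_compl_of_notMem hH rfl hb, linkCount_compl_of_notMem hH rfl hb]
  have hswap := card_filter_swap_le ha hb hmin
  have hsplit_a : #{e ∈ H | a ∈ e ∧ #(e ∩ A) = 1 + 1} ≤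
      #{e ∈ H | a ∈ e ∧ b ∉ e ∧ #(e ∩ A) = 2} + #{e ∈ H | {a, b} ⊆ e} :=
    card_filter_le_card_filter_add_card_filter fun e _ he => by
      by_cases hbe : b ∈ e
      · exact .inr (by simp [insert_subset_iff, he.1, hbe])
      · exact .inl ⟨he.1, hbe, he.2⟩
  have hsplit_b : #{e ∈ H | b ∈ e ∧ #(e ∩ A) = 2} ≤
      #{e ∈ H | b ∈ e ∧ a ∉ e ∧ #(e ∩ A) = 2} + #{e ∈ H | {a, b} ⊆ e} :=
    card_filter_le_card_filter_add_card_filter fun e _ he => by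
      by_cases hae : a ∈ e
      · exact .inr (by simp [insert_subset_iff, he.1, hae])
      · exact .inl ⟨he.1, hae, he.2⟩
  have hmono_a : #{e ∈ H | a ∈ e ∧ b ∉ e ∧ #(e ∩ A) = 3} ≤ #{e ∈ H | a ∈ e ∧ #(e ∩ A) = 2 + 1} :=
    card_le_card fun e he => by
      simp only [mem_filter] at he ⊢
      exact ⟨he.1, he.2.1, he.2.2.2⟩
  have hmono_b : #{e ∈ H | b ∈ e ∧ a ∉ e ∧ #(e ∩ A) = 1} ≤ #{e ∈ H | b ∈ e ∧ #(e ∩ A) = 1} :=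
    card_le_card fun e he => by
      simp only [mem_filter] at he ⊢
      exact ⟨he.1, he.2.1, he.2.2.2⟩
  omega

theorem card_mul_codegree_le_linkCount_add (hH : ∀ e ∈ H, #e = 4) {δ : ℕ}
    (hδ : ∀ S : Finset V, #S = 3 → δ ≤ #{x | x ∉ S ∧ insert x S ∈ H}) (hb : b ∉ A) :
    #A * (#Aᶜ - 1) * δ ≤ 2 * (linkCount H b A Aᶜ 2 1 + linkCount H b A Aᶜ 1 2) := by
  -- Double count pairs `(p, e)` with `{b, p.1, p.2} ⊆ e ∈ H`: an edge through `b` meeting `A`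
  -- in `k` vertices contains `k * (3 - k)` such triples: `2` if `k ∈ {1, 2}`, else `0`.
  set Hb := {e ∈ H | b ∈ e}
  let r : V × V → Finset V → Prop := fun p e => p.1 ∈ e ∧ p.2 ∈ e
  have hcodeg : ∀ p ∈ A ×ˢ Aᶜ.erase b, δ ≤ #(Hb.bipartiteAbove r p) := by
    rintro ⟨x, y⟩ hp
    simp only [mem_product, mem_erase, mem_compl] at hp
    obtain ⟨hx, hyb, hy⟩ := hp
    have hS : #{b, x, y} = 3 := card_eq_three.2
      ⟨b, x, y, fun h => hb (h ▸ hx), Ne.symm hyb, fun h => hy (h ▸ hx), rfl⟩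
    refine (hδ _ hS).trans (card_le_card_of_injOn (insert · {b, x, y}) (fun z hz => ?_)
      (fun z hz z' _ h => (insert_inj (mem_filter.1 hz).2.1).1 h))
    simp only [coe_filter, Set.mem_ofPred_eq, mem_univ, true_and] at hz
    simp [Hb, r, bipartiteAbove, hz.2]
  have hedge : ∀ e ∈ Hb, #((A ×ˢ Aᶜ.erase b).bipartiteBelow r e) ≤
      2 * ((if #(e ∩ A) = 2 then 1 else 0) + (if #(e ∩ A) = 1 then 1 else 0)) := by
    intro e he
    have hbe : b ∈ Aᶜ ∩ e := mem_inter.2 ⟨mem_compl.2 hb, (mem_filter.1 he).2⟩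
    have hpart := card_inter_add_card_sdiff e A
    rw [sdiff_eq_inter_compl, hH e (mem_filter.1 he).1] at hpart
    have hcompl := card_erase_add_one hbe
    simp only [bipartiteBelow, r, filter_product, filter_mem_eq_inter, card_product,
      erase_inter, inter_comm A e, inter_comm Aᶜ e] at hcompl ⊢
    generalize #(e ∩ A) = k at *
    generalize #((e ∩ Aᶜ).erase b) = m at *
    obtain rfl : m = 3 - k := by omega
    rcases (by omega : k = 0 ∨ k = 1 ∨ k = 2 ∨ k = 3) with rfl | rfl | rfl | rfl <;> simp
  calc #A * (#Aᶜ - 1) * δ = ∑ p ∈ A ×ˢ Aᶜ.erase b, δ := by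
        rw [sum_const, card_product, card_erase_of_mem (mem_compl.2 hb), smul_eq_mul]
    _ ≤ ∑ p ∈ A ×ˢ Aᶜ.erase b, #(Hb.bipartiteAbove r p) := sum_le_sum hcodeg
    _ = ∑ e ∈ Hb, #((A ×ˢ Aᶜ.erase b).bipartiteBelow r e) :=
        sum_card_bipartiteAbove_eq_sum_card_bipartiteBelow r
    _ ≤ ∑ e ∈ Hb, 2 * ((if #(e ∩ A) = 2 then 1 else 0) + (if #(e ∩ A) = 1 then 1 else 0)) :=
        sum_le_sum hedge
    _ = 2 * (linkCount H b A Aᶜ 2 1 + linkCount H b A Aᶜ 1 2) := by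
        rw [← mul_sum, sum_add_distrib, ← card_filter, ← card_filter, filter_filter,
          filter_filter, linkCount_compl_of_notMem hH rfl hb, linkCount_compl_of_notMem hH rfl hb]

theorem linkCount_le_two_mul_add {n : ℕ} (hH : ∀ e ∈ H, #e = 4) (hA : #A = n) (hAc : #Aᶜ = n)
    (hδ : ∀ S : Finset V, #S = 3 → n - 1 ≤ #{x | x ∉ S ∧ insert x S ∈ H})
    (hmin : ∀ A' : Finset V, #A' = n → #{e ∈ H | #(e ∩ A) = 2} ≤ #{e ∈ H | #(e ∩ A') = 2})
    (ha : a ∈ A) (hb : b ∉ A) :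
    (linkCount H a A Aᶜ 1 2 : ℝ) ≤ 2 * linkCount H b A Aᶜ 1 2 + 5 * n ^ 2 := by
  have hn1 : 1 ≤ n := hA ▸ card_pos.2 ⟨a, ha⟩
  have hswap := linkCount_swap_le hH ha hb <| hmin _ <| by
    rw [card_insert_of_notMem fun h => hb (mem_of_mem_erase h), card_erase_of_mem ha, hA]
    omega
  have hlow := card_mul_codegree_le_linkCount_add hH hδ hb
  have hup := linkCount_le_choose_mul_choose H a A 2 1
  have hD := card_filter_superset_le hH {a, b}
  rw [card_pair (ne_of_mem_of_not_mem ha hb), ← card_add_card_compl A] at hD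
  rw [hA, hAc] at hlow hup hD
  have hswapR : (linkCount H a A Aᶜ 1 2 : ℝ) + linkCount H b A Aᶜ 2 1 ≤
      linkCount H a A Aᶜ 2 1 + linkCount H b A Aᶜ 1 2 + 2 * #{e ∈ H | {a, b} ⊆ e} := by
    exact_mod_cast hswap
  have hlowR : (n : ℝ) * (n - 1) * (n - 1) ≤
      2 * ((linkCount H b A Aᶜ 2 1 : ℝ) + linkCount H b A Aᶜ 1 2) := by
    have := (Nat.cast_le (α := ℝ)).2 hlow
    push_cast [Nat.cast_sub hn1] at this
    exact this
  have hupR : (linkCount H a A Aᶜ 2 1 : ℝ) ≤ n * (n - 1) / 2 * n := by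
    simpa [Nat.cast_choose_two] using (Nat.cast_le (α := ℝ)).2 hup
  have hDR : (#{e ∈ H | {a, b} ⊆ e} : ℝ) ≤ (n + n) * (n + n - 1) / 2 := by
    simpa [Nat.cast_choose_two] using (Nat.cast_le (α := ℝ)).2 hD
  linarith

end Link

theorem stmt_16 :
    ∀ ε : ℝ, 0 < ε → ∃ n₀ : ℕ, ∀ n : ℕ, n₀ ≤ n →
    ∀ (V : Type) [Fintype V] [DecidableEq V],
    ∀ (A B : Finset V) (H : Finset (Finset V)),
      Disjoint A B → A ∪ B = Finset.univ → A.card = n → B.card = n →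
      (∀ e ∈ H, e.card = 4) →
      (∀ S : Finset V, S.card = 3 →
        (n : ℝ) - 1 ≤ ((Finset.univ.filter (fun x => x ∉ S ∧ insert x S ∈ H)).card : ℝ)) →
      (∀ A' B' : Finset V, Disjoint A' B' → A' ∪ B' = Finset.univ → A'.card = n →
        (H.filter (fun e => (e ∩ A).card = 2)).card ≤
          (H.filter (fun e => (e ∩ A').card = 2)).card) →
      (∃ b ∈ B, (linkCount H b A B 1 2 : ℝ) ≤ (ε / 2) * n ^ 3) →
      ∀ a ∈ A, (linkCount H a A B 1 2 : ℝ) ≤ (3/2) * ε * n ^ 3 := by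
  intro ε hε
  refine ⟨⌈10 / ε⌉₊, fun n hn V _ _ A B H hAB hU hA hB hH hdeg hmin ⟨b, hb, hb_small⟩ a ha => ?_⟩
  obtain rfl : Aᶜ = B := IsCompl.compl_eq ⟨hAB, codisjoint_iff.2 hU⟩
  have hεn : 10 ≤ ε * n := (div_le_iff₀' hε).1 ((Nat.le_ceil _).trans (Nat.cast_le.2 hn))
  have hcodeg : ∀ S : Finset V, #S = 3 → n - 1 ≤ #{x | x ∉ S ∧ insert x S ∈ H} := fun S hS =>
    Nat.sub_le_iff_le_add.2 <| (Nat.cast_le (α := ℝ)).1 <| by push_cast; linarith [hdeg S hS]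
  have key := linkCount_le_two_mul_add hH hA hB hcodeg
    (fun A' hA' => hmin A' A'ᶜ disjoint_compl_right (union_compl A') hA') ha (mem_compl.1 hb)
  linarith [mul_le_mul_of_nonneg_right hεn (sq_nonneg (n : ℝ))]
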